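/- Let p, q, r be three distinct primes. If S is a cyclotomic numerical semigroup of depth pqr and height 1, then S equals one of ⟨pr, q⟩, ⟨pq, r⟩, or ⟨qr, p⟩. -/

import Mathlib

open Polynomial
open scoped Classical

/-- A numerical semigroup: a subset of `ℕ` containing `0`, closed under addition,
with finite complement in `ℕ`. -/
structure NumericalSemigroup where
  carrier : Set ℕ
  zero_mem : 0 ∈ carrier
  add_mem : ∀ ⦃a b : ℕ⦄, a ∈ carrier → b ∈ carrier → a + b ∈ carrier
  finite_compl : Set.Finite carrierᶜ

namespace NumericalSemigroup

/-- The Hilbert series `H_S(x) = Σ_{s ∈ S} x^s`. -/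
noncomputable def H (S : NumericalSemigroup) : PowerSeries ℤ :=
  PowerSeries.mk fun n => if n ∈ S.carrier then 1 else 0

/-- The Hilbert series evaluated at `x^w`: `H_S(x^w) = Σ_{s ∈ S} x^{w·s}`. -/
noncomputable def Hexp (S : NumericalSemigroup) (w : ℕ) : PowerSeries ℤ :=
  PowerSeries.mk fun n => if ∃ s ∈ S.carrier, n = w * s then 1 else 0

/-- The semigroup polynomial `P_S(x) = (1-x)·H_S(x) = 1 + (x-1)·Σ_{s ∉ S} x^s`. -/
noncomputable def P (S : NumericalSemigroup) : Polynomial ℤ :=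
  1 + (X - 1) * ∑ s ∈ S.finite_compl.toFinset, X ^ s

/-- The Frobenius number: the largest integer not in `S` (equal to `-1` when `S = ℕ`). -/
noncomputable def Frob (S : NumericalSemigroup) : ℤ :=
  (insert (-1 : ℤ) (S.finite_compl.toFinset.image fun n : ℕ => (n : ℤ))).max'
    (Finset.insert_nonempty _ _)

/-- The genus: the number of gaps of `S`. -/
noncomputable def genus (S : NumericalSemigroup) : ℕ := S.finite_compl.toFinset.card

/-- `S` viewed as a set of integers. -/
def intSet (S : NumericalSemigroup) : Set ℤ := (fun n : ℕ => (n : ℤ)) '' S.carrier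

/-- `S` is cyclotomic if every complex root of `P_S` lies in the closed unit disc. -/
def IsCyclotomicNS (S : NumericalSemigroup) : Prop :=
  ∀ z : ℂ, Polynomial.aeval z S.P = 0 → ‖z‖ ≤ 1

/-- `S` is symmetric if for every integer `z`, `z ∈ S ↔ F(S) - z ∉ S`. -/
def IsSymmetric (S : NumericalSemigroup) : Prop :=
  ∀ z : ℤ, z ∈ S.intSet ↔ S.Frob - z ∉ S.intSet

/-- The Apéry set of `S` with respect to `m`: elements `s ∈ S` with `s - m ∉ S`
(in particular all `s ∈ S` with `s < m`). -/
def Ap (S : NumericalSemigroup) (m : ℕ) : Set ℕ :=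
  {s ∈ S.carrier | ∀ t ∈ S.carrier, t + m ≠ s}

end NumericalSemigroup

open NumericalSemigroup in
/-- A cyclotomic numerical semigroup `S` has depth `d` and height `h` if
`P_S ∣ (x^d-1)^h`, `P_S` does not divide `(x^n-1)^{h-1}` for any positive `n`, and
`P_S` does not divide `(x^{d₁}-1)^h` for any proper divisor `d₁` of `d`. -/
def HasDepthHeight (S : NumericalSemigroup) (d h : ℕ) : Prop :=
  S.P ∣ ((X : Polynomial ℤ) ^ d - 1) ^ h ∧
  (∀ n : ℕ, 0 < n → ¬ S.P ∣ ((X : Polynomial ℤ) ^ n - 1) ^ (h - 1)) ∧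
  (∀ d₁ : ℕ, d₁ ∣ d → d₁ < d → ¬ S.P ∣ ((X : Polynomial ℤ) ^ d₁ - 1) ^ h)

/-!
Height one means `P_S ∣ x^{pqr} - 1`, so `P_S` is a product of distinct cyclotomic polynomials
`Φ_d` with `d ∣ pqr`. Evaluating at `1` (where `P_S(1) = 1`, `Φ_1(1) = 0` and `Φ_ℓ(1) = ℓ` for a
prime `ℓ`) leaves only `d ∈ {pq, pr, qr, pqr}`. The coefficient of `x` in `P_S` is `-1`, since
`0 ∈ S` and `1 ∉ S`, while in `Φ_d` it is `-μ(d)`. Hence `P_S` is either a single `Φ_d`, which the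
depth condition excludes, or `Φ_{ab} Φ_{bc} Φ_{abc}` for `{a, b, c} = {p, q, r}`. That product is
`(1 - x)(1 - x^{abc}) / ((1 - x^{ac})(1 - x^b))`, the semigroup polynomial of `⟨ac, b⟩`, and `P_S`
determines the Hilbert series of `S`.
-/

theorem exists_subset_associated_prod_of_dvd_prod {ι M : Type*} [CommMonoidWithZero M]
    [IsCancelMulZero M] {f : ι → M} {s : Finset ι} (hf : ∀ i ∈ s, Prime (f i)) {a : M}
    (ha : a ∣ ∏ i ∈ s, f i) : ∃ t ⊆ s, Associated a (∏ i ∈ t, f i) := by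
  induction s using Finset.induction_on generalizing a with
  | empty => exact ⟨∅, subset_rfl, by simpa using isUnit_of_dvd_one ha⟩
  | @insert i s hi ih =>
    have hfi := hf i (Finset.mem_insert_self i s)
    have hf' := fun j hj => hf j (Finset.mem_insert_of_mem hj)
    rw [Finset.prod_insert hi] at ha
    by_cases hia : f i ∣ a
    · obtain ⟨a, rfl⟩ := hia
      obtain ⟨t, hts, hat⟩ := ih hf' ((mul_dvd_mul_iff_left hfi.ne_zero).mp ha)
      refine ⟨insert i t, Finset.insert_subset_insert i hts, ?_⟩
      rw [Finset.prod_insert fun h => hi (hts h)]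
      exact hat.mul_left (f i)
    · obtain ⟨c, hc⟩ := ha
      obtain ⟨c, rfl⟩ := (hfi.dvd_or_dvd ⟨_, hc.symm⟩).resolve_left hia
      have : ∏ j ∈ s, f j = a * c := mul_left_cancel₀ hfi.ne_zero (by rw [hc, mul_left_comm])
      obtain ⟨t, hts, hat⟩ := ih hf' ⟨c, this⟩
      exact ⟨t, hts.trans (Finset.subset_insert i s), hat⟩

namespace Polynomial

theorem exists_eq_prod_cyclotomic_of_dvd_X_pow_sub_one {n : ℕ} (hn : 0 < n) {f : ℤ[X]}
    (hf : f ∣ X ^ n - 1) (hf1 : f.eval 1 = 1) :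
    ∃ E ⊆ n.divisors, f = ∏ e ∈ E, cyclotomic e ℤ ∧ ∀ e ∈ E, (cyclotomic e ℤ).eval 1 = 1 := by
  rw [← prod_cyclotomic_eq_X_pow_sub_one hn] at hf
  obtain ⟨E, hE, u, hu⟩ := exists_subset_associated_prod_of_dvd_prod (fun d hd =>
    UniqueFactorizationMonoid.irreducible_iff_prime.mp
      (cyclotomic.irreducible (Nat.pos_of_mem_divisors hd))) hf
  obtain ⟨ε, hε, hεu⟩ := isUnit_iff.mp u.isUnit
  have heval : ε = ∏ e ∈ E, (cyclotomic e ℤ).eval 1 := by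
    simpa [← hεu, hf1, eval_prod] using congrArg (eval 1) hu
  have hε1 : ε = 1 := by
    refine (Int.isUnit_iff.mp hε).resolve_right fun h => ?_
    have := Finset.prod_nonneg fun e (_ : e ∈ E) => cyclotomic_nonneg e (le_refl (1 : ℤ))
    omega
  refine ⟨E, hE, by simpa [← hεu, hε1] using hu, fun e he => ?_⟩
  exact Int.eq_one_of_dvd_one (cyclotomic_nonneg e le_rfl)
    ((Finset.dvd_prod_of_mem _ he).trans (heval ▸ hε1).dvd)

theorem eq_of_dvd_mul_mul_of_eval_one_cyclotomic {p q r e : ℕ} (hp : p.Prime) (hq : q.Prime)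
    (hr : r.Prime) (he : e ∣ p * q * r) (he1 : (cyclotomic e ℤ).eval 1 = 1) :
    e = p * q ∨ e = p * r ∨ e = q * r ∨ e = p * q * r := by
  have hprime {x : ℕ} (hx : x.Prime) : (cyclotomic x ℤ).eval 1 ≠ 1 := by
    have := Fact.mk hx
    rw [eval_one_cyclotomic_prime]
    exact_mod_cast hx.one_lt.ne'
  obtain ⟨xy, z, hxy, hz, rfl⟩ := Nat.dvd_mul.mp he
  obtain ⟨x, y, hx, hy, rfl⟩ := Nat.dvd_mul.mp hxy
  rcases (Nat.dvd_prime hp).mp hx with rfl | rfl <;>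
    rcases (Nat.dvd_prime hq).mp hy with rfl | rfl <;>
    rcases (Nat.dvd_prime hr).mp hz with rfl | rfl <;>
    simp only [one_mul, mul_one] at he1 ⊢ <;>
    first
    | exact absurd he1 (by simp)
    | exact absurd he1 (hprime ‹_›)
    | simp

theorem coeff_one_mul {R : Type*} [CommSemiring R] (f g : R[X]) :
    (f * g).coeff 1 = f.coeff 0 * g.coeff 1 + f.coeff 1 * g.coeff 0 := by
  simp [coeff_mul, Finset.Nat.antidiagonal_succ]

theorem coeff_one_prod {ι R : Type*} [CommSemiring R] (s : Finset ι) (f : ι → R[X])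
    (hf : ∀ i ∈ s, (f i).coeff 0 = 1) : (∏ i ∈ s, f i).coeff 1 = ∑ i ∈ s, (f i).coeff 1 := by
  induction s using Finset.induction_on with
  | empty => simp [coeff_one]
  | @insert i s hi ih =>
    have hf' := fun j hj => hf j (Finset.mem_insert_of_mem hj)
    rw [Finset.prod_insert hi, Finset.sum_insert hi, coeff_one_mul, ih hf', coeff_zero_prod,
      Finset.prod_eq_one hf', hf i (Finset.mem_insert_self i s)]
    ring

variable {R : Type*} [CommRing R]

theorem cyclotomic_prime_coeff_one {p : ℕ} (hp : p.Prime) : (cyclotomic p R).coeff 1 = 1 := by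
  have := Fact.mk hp
  simp [cyclotomic_prime, coeff_X_pow, hp.one_lt]

theorem cyclotomic_mul_prime_coeff_one {n p : ℕ} (hn : 1 < n) (hp : p.Prime) (hpn : ¬p ∣ n) :
    (cyclotomic (n * p) R).coeff 1 = -(cyclotomic n R).coeff 1 := by
  have h := congrArg (coeff · 1) (cyclotomic_expand_eq_cyclotomic_mul hp hpn R)
  simp only [coeff_expand hp.pos, hp.not_dvd_one, if_false, coeff_one_mul,
    cyclotomic_coeff_zero R hn,
    cyclotomic_coeff_zero R (hn.trans_le (Nat.le_mul_of_pos_right n hp.pos))] at h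
  linear_combination -h

theorem cyclotomic_mul_cyclotomic_mul_cyclotomic_mul_X_pow_sub_one {a b c : ℕ} (ha : a.Prime)
    (hb : b.Prime) (hc : c.Prime) (hab : a ≠ b) (hac : a ≠ c) (hbc : b ≠ c) :
    cyclotomic (a * b) R * cyclotomic (b * c) R * cyclotomic (a * b * c) R *
      ((X ^ (a * c) - 1) * (X ^ b - 1)) = (X ^ (a * c * b) - 1) * (X - 1) := by
  have hndvd {x y : ℕ} (hx : x.Prime) (hy : y.Prime) (hxy : x ≠ y) : ¬x ∣ y :=
    fun h => hxy ((Nat.prime_dvd_prime_iff_eq hx hy).mp h)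
  have := Fact.mk ha
  have := Fact.mk hc
  have h_ac : X ^ (a * c) - 1 =
      cyclotomic (a * c) R * cyclotomic a R * cyclotomic c R * (X - 1) := by
    have h := congrArg (expand R c) (cyclotomic_prime_mul_X_sub_one R a)
    simp only [map_mul, map_sub, map_pow, map_one, expand_X,
      cyclotomic_expand_eq_cyclotomic_mul hc (hndvd hc ha hac.symm)] at h
    rw [← pow_mul, mul_comm c a, ← cyclotomic_prime_mul_X_sub_one R c] at h
    rw [← h]
    ring
  have h_acb := congrArg (expand R b) h_ac
  simp only [map_mul, map_sub, map_pow, map_one, expand_X,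
    cyclotomic_expand_eq_cyclotomic_mul hb (hndvd hb ha hab.symm),
    cyclotomic_expand_eq_cyclotomic_mul hb (hndvd hb hc hbc),
    cyclotomic_expand_eq_cyclotomic_mul hb (fun h => ((Nat.Prime.dvd_mul hb).mp h).elim
      (hndvd hb ha hab.symm) (hndvd hb hc hbc))] at h_acb
  rw [← pow_mul, mul_comm b (a * c), mul_comm c b, mul_right_comm a c b] at h_acb
  linear_combination cyclotomic (a * b) R * cyclotomic (b * c) R * cyclotomic (a * b * c) R *
    (X ^ b - 1) * h_ac - (X - 1) * h_acb

theorem cyclotomic_prime_mul_prime_coeff_one {p q : ℕ} (hp : p.Prime) (hq : q.Prime)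
    (hpq : p ≠ q) : (cyclotomic (p * q) R).coeff 1 = -1 := by
  rw [cyclotomic_mul_prime_coeff_one hp.one_lt hq ((Nat.prime_dvd_prime_iff_eq hq hp).not.mpr
    hpq.symm), cyclotomic_prime_coeff_one hp]

theorem cyclotomic_prime_mul_prime_mul_prime_coeff_one {p q r : ℕ} (hp : p.Prime) (hq : q.Prime)
    (hr : r.Prime) (hpq : p ≠ q) (hpr : p ≠ r) (hqr : q ≠ r) :
    (cyclotomic (p * q * r) R).coeff 1 = 1 := by
  have hr_pq : ¬r ∣ p * q := (Nat.Prime.coprime_iff_not_dvd hr).mp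
    (Nat.Coprime.mul_right ((Nat.coprime_primes hr hp).mpr hpr.symm)
      ((Nat.coprime_primes hr hq).mpr hqr.symm))
  rw [cyclotomic_mul_prime_coeff_one (Nat.one_lt_mul_iff.mpr ⟨hp.pos, hq.pos, Or.inl hp.one_lt⟩)
    hr hr_pq, cyclotomic_prime_mul_prime_coeff_one hp hq hpq, neg_neg]

theorem prod_cyclotomic_cases {p q r : ℕ} (hp : p.Prime) (hq : q.Prime) (hr : r.Prime)
    (hpq : p ≠ q) (hpr : p ≠ r) (hqr : q ≠ r) {E : Finset ℕ}
    (hE : ∀ e ∈ E, e = p * q ∨ e = p * r ∨ e = q * r ∨ e = p * q * r)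
    (hE1 : (∏ e ∈ E, cyclotomic e ℤ).coeff 1 = -1) :
    (∃ e, E = {e} ∧ e ≠ p * q * r) ∨
      ∏ e ∈ E, cyclotomic e ℤ = cyclotomic (p * q) ℤ * cyclotomic (q * r) ℤ *
        cyclotomic (p * q * r) ℤ ∨
      ∏ e ∈ E, cyclotomic e ℤ = cyclotomic (p * r) ℤ * cyclotomic (q * r) ℤ *
        cyclotomic (p * q * r) ℤ ∨
      ∏ e ∈ E, cyclotomic e ℤ = cyclotomic (p * q) ℤ * cyclotomic (p * r) ℤ *
        cyclotomic (p * q * r) ℤ := by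
  set N := p * q * r
  have hF : ∀ e ∈ E.erase N, e = p * q ∨ e = p * r ∨ e = q * r := fun e he => by
    obtain ⟨heN, heE⟩ := Finset.mem_erase.mp he
    rcases hE e heE with h | h | h | h
    exacts [Or.inl h, Or.inr (Or.inl h), Or.inr (Or.inr h), absurd h heN]
  have hcoeffF : ∀ e ∈ E.erase N, (cyclotomic e ℤ).coeff 1 = -1 := fun e he => by
    rcases hF e he with rfl | rfl | rfl
    exacts [cyclotomic_prime_mul_prime_coeff_one hp hq hpq,
      cyclotomic_prime_mul_prime_coeff_one hp hr hpr,
      cyclotomic_prime_mul_prime_coeff_one hq hr hqr]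
  have hsumF : ∑ e ∈ E.erase N, (cyclotomic e ℤ).coeff 1 = -(E.erase N).card := by
    simp [Finset.sum_congr rfl hcoeffF]
  have hE0 : ∀ e ∈ E, (cyclotomic e ℤ).coeff 0 = 1 := fun e he => by
    refine cyclotomic_coeff_zero ℤ ?_
    rcases hE e he with rfl | rfl | rfl | rfl <;>
      simp [N, Nat.one_lt_mul_iff, hp.pos, hq.pos, hr.pos, hp.one_lt, hq.one_lt]
  rw [coeff_one_prod _ _ hE0] at hE1
  by_cases hN : N ∈ E
  · rw [← Finset.add_sum_erase E _ hN, hsumF,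
      cyclotomic_prime_mul_prime_mul_prime_coeff_one hp hq hr hpq hpr hqr] at hE1
    obtain ⟨x, y, hxy, hxyF⟩ := Finset.card_eq_two.mp (by omega : (E.erase N).card = 2)
    have hx := hF x (by simp [hxyF])
    have hy := hF y (by simp [hxyF])
    rw [← Finset.mul_prod_erase E _ hN, hxyF, Finset.prod_pair hxy]
    rcases hx with rfl | rfl | rfl <;> rcases hy with rfl | rfl | rfl <;>
      first
      | exact absurd rfl hxy
      | (right; left; ring1)
      | (right; right; left; ring1)
      | (right; right; right; ring1)
  · rw [← Finset.erase_eq_of_notMem hN, hsumF] at hE1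
    obtain ⟨e, he⟩ := Finset.card_eq_one.mp (by omega : (E.erase N).card = 1)
    rw [Finset.erase_eq_of_notMem hN] at he
    exact Or.inl ⟨e, he, fun h => hN (by simp [he, h])⟩

end Polynomial

namespace NumericalSemigroup

noncomputable def hilbertSeries (A : Set ℕ) : PowerSeries ℤ :=
  PowerSeries.mk fun n => if n ∈ A then 1 else 0

section HilbertSeries

open PowerSeries (coeff coeff_mk)

@[simp]
theorem coeff_hilbertSeries (A : Set ℕ) (n : ℕ) :
    coeff n (hilbertSeries A) = if n ∈ A then 1 else 0 :=
  coeff_mk _ _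

theorem hilbertSeries_injective : Function.Injective hilbertSeries := by
  intro A B h
  ext n
  have := congrArg (PowerSeries.coeff n) h
  simp only [coeff_hilbertSeries] at this
  split_ifs at this <;> simp_all

theorem hilbertSeries_sdiff {A B : Set ℕ} (h : B ⊆ A) :
    hilbertSeries (A \ B) = hilbertSeries A - hilbertSeries B := by
  ext n
  by_cases hB : n ∈ B
  · simp [hB, h hB]
  · by_cases hA : n ∈ A <;> simp [hA, hB]

theorem hilbertSeries_image_add (A : Set ℕ) (b : ℕ) :
    hilbertSeries ((· + b) '' A) = PowerSeries.X ^ b * hilbertSeries A := by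
  ext n
  rw [PowerSeries.coeff_X_pow_mul', coeff_hilbertSeries, coeff_hilbertSeries]
  split_ifs <;> grind

theorem hilbertSeries_coe_finset (s : Finset ℕ) :
    hilbertSeries s = ∑ i ∈ s, PowerSeries.X ^ i := by
  ext n
  simp [PowerSeries.coeff_X_pow]

theorem one_sub_X_mul_hilbertSeries_univ :
    (1 - PowerSeries.X) * hilbertSeries Set.univ = 1 := by
  have : hilbertSeries Set.univ = PowerSeries.mk 1 := by ext n; simp
  rw [this, mul_comm, PowerSeries.mk_one_mul_one_sub_eq_one]

end HilbertSeries

/-- The Apéry set of `⟨m, b⟩` with respect to `b`. -/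
theorem closure_pair_sdiff_image_add {m b : ℕ} (hm : 0 < m) (hb : 0 < b) (hmb : m.Coprime b) :
    (AddSubmonoid.closure {m, b} : Set ℕ) \ ((· + b) '' AddSubmonoid.closure {m, b}) =
      ((Finset.range b).image (m * ·) : Set ℕ) := by
  ext k
  simp only [Set.mem_sdiff, Set.mem_image, SetLike.mem_coe, AddSubmonoid.mem_closure_pair,
    smul_eq_mul, Finset.coe_image, Finset.coe_range, Set.mem_Iio]
  constructor
  · rintro ⟨⟨i, j, rfl⟩, hk⟩
    obtain rfl : j = 0 := by
      by_contra hj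
      obtain ⟨j, rfl⟩ := Nat.exists_eq_add_one_of_ne_zero hj
      exact hk ⟨i * m + j * b, ⟨i, j, rfl⟩, by ring⟩
    refine ⟨i, ?_, by ring⟩
    by_contra hi
    obtain ⟨i, rfl⟩ := Nat.exists_eq_add_of_le (not_lt.mp hi)
    obtain ⟨m, rfl⟩ := Nat.exists_eq_add_one_of_ne_zero hm.ne'
    exact hk ⟨i * (m + 1) + m * b, ⟨i, m, rfl⟩, by ring⟩
  · rintro ⟨j, hj, rfl⟩
    refine ⟨⟨j, 0, by ring⟩, ?_⟩
    rintro ⟨_, ⟨i, l, rfl⟩, h⟩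
    have hij : i ≤ j := Nat.le_of_mul_le_mul_right (by nlinarith) hm
    have hmod : m * j ≡ m * i [MOD b] := by
      rw [← h, Nat.ModEq, mul_comm i m, add_assoc, ← add_one_mul, Nat.add_mul_mod_self_right]
    have := Nat.ModEq.cancel_left_of_coprime hmb.symm hmod
    rw [Nat.ModEq, Nat.mod_eq_of_lt hj, Nat.mod_eq_of_lt (hij.trans_lt hj)] at this
    subst this
    nlinarith

theorem hilbertSeries_closure_pair_mul {m b : ℕ} (hm : 0 < m) (hb : 0 < b) (hmb : m.Coprime b) :
    hilbertSeries ↑(AddSubmonoid.closure ({m, b} : Set ℕ)) *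
      ((1 - PowerSeries.X ^ m) * (1 - PowerSeries.X ^ b)) = 1 - PowerSeries.X ^ (m * b) := by
  set T : Set ℕ := ↑(AddSubmonoid.closure ({m, b} : Set ℕ))
  have hsub : (· + b) '' T ⊆ T := Set.image_subset_iff.mpr fun t ht =>
    AddSubmonoid.add_mem _ ht (AddSubmonoid.subset_closure (by simp))
  have hinj : Set.InjOn (m * ·) (Finset.range b : Set ℕ) := fun _ _ _ _ h =>
    Nat.eq_of_mul_eq_mul_left hm h
  calc hilbertSeries T * ((1 - PowerSeries.X ^ m) * (1 - PowerSeries.X ^ b))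
      = (hilbertSeries T - PowerSeries.X ^ b * hilbertSeries T) * (1 - PowerSeries.X ^ m) := by
        ring
    _ = (∑ j ∈ Finset.range b, (PowerSeries.X ^ m) ^ j) * (1 - PowerSeries.X ^ m) := by
        rw [← hilbertSeries_image_add, ← hilbertSeries_sdiff hsub,
          closure_pair_sdiff_image_add hm hb hmb, hilbertSeries_coe_finset,
          Finset.sum_image hinj]
        simp only [pow_mul]
    _ = 1 - PowerSeries.X ^ (m * b) := by rw [geom_sum_mul_neg, pow_mul]

variable (S : NumericalSemigroup)

theorem coe_P : (S.P : PowerSeries ℤ) = (1 - PowerSeries.X) * hilbertSeries S.carrier := by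
  have hgaps : hilbertSeries S.carrierᶜ = ((∑ s ∈ S.finite_compl.toFinset, X ^ s : ℤ[X]) :
      PowerSeries ℤ) := by
    conv_lhs => rw [← S.finite_compl.coe_toFinset, hilbertSeries_coe_finset]
    rw [← Polynomial.coeToPowerSeries.ringHom_apply, map_sum]
    simp
  have hS : hilbertSeries S.carrier = hilbertSeries Set.univ - hilbertSeries S.carrierᶜ := by
    rw [← hilbertSeries_sdiff (Set.subset_univ _), Set.sdiff_compl, Set.univ_inter]
  rw [hS, mul_sub, one_sub_X_mul_hilbertSeries_univ, hgaps, P]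
  push_cast
  ring

theorem coeff_one_P (h : 1 ∉ S.carrier) : S.P.coeff 1 = -1 := by
  rw [← Polynomial.coeff_coe, coe_P, sub_mul, one_mul, map_sub, PowerSeries.coeff_succ_X_mul]
  simp [S.zero_mem, h]

theorem eval_one_P : S.P.eval 1 = 1 := by
  simp [P]

theorem P_eq_one_of_one_mem (h : 1 ∈ S.carrier) : S.P = 1 := by
  have : S.carrier = Set.univ := Set.eq_univ_of_forall fun n => by
    induction n with
    | zero => exact S.zero_mem
    | succ n ih => exact S.add_mem ih h
  simp [P, this]

theorem carrier_eq_closure_pair_of_P_mul {m b : ℕ} (hm : 0 < m) (hb : 0 < b) (hmb : m.Coprime b)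
    (h : S.P * ((X ^ m - 1) * (X ^ b - 1)) = (X ^ (m * b) - 1) * (X - 1)) :
    S.carrier = ↑(AddSubmonoid.closure ({m, b} : Set ℕ)) := by
  apply hilbertSeries_injective
  have hQ : IsUnit ((1 - PowerSeries.X) *
      ((1 - PowerSeries.X ^ m) * (1 - PowerSeries.X ^ b)) : PowerSeries ℤ) :=
    PowerSeries.isUnit_iff_constantCoeff.mpr (by simp [hm.ne', hb.ne'])
  refine hQ.mul_right_cancel ?_
  have hcast := congrArg (fun f : ℤ[X] => (f : PowerSeries ℤ)) h
  simp only [Polynomial.coe_mul, Polynomial.coe_sub, Polynomial.coe_pow, Polynomial.coe_X,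
    Polynomial.coe_one, coe_P] at hcast
  linear_combination hcast - (1 - PowerSeries.X) * hilbertSeries_closure_pair_mul hm hb hmb

theorem carrier_eq_closure_of_P_eq_cyclotomic {a b c : ℕ} (ha : a.Prime) (hb : b.Prime)
    (hc : c.Prime) (hab : a ≠ b) (hac : a ≠ c) (hbc : b ≠ c)
    (h : S.P = cyclotomic (a * b) ℤ * cyclotomic (b * c) ℤ * cyclotomic (a * b * c) ℤ) :
    S.carrier = ↑(AddSubmonoid.closure ({a * c, b} : Set ℕ)) :=
  S.carrier_eq_closure_pair_of_P_mul (Nat.mul_pos ha.pos hc.pos) hb.pos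
    (Nat.Coprime.mul_left ((Nat.coprime_primes ha hb).mpr hab)
      ((Nat.coprime_primes hc hb).mpr hbc.symm))
    (h ▸ cyclotomic_mul_cyclotomic_mul_cyclotomic_mul_X_pow_sub_one ha hb hc hab hac hbc)

end NumericalSemigroup

open NumericalSemigroup in
theorem depth_pqr_height_one_general (p q r : ℕ) (hp : p.Prime) (hq : q.Prime) (hr : r.Prime)
    (hpq : p ≠ q) (hpr : p ≠ r) (hqr : q ≠ r) (S : NumericalSemigroup)
    (hdh : HasDepthHeight S (p * q * r) 1) :
    S.carrier = ↑(AddSubmonoid.closure ({p * r, q} : Set ℕ)) ∨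
    S.carrier = ↑(AddSubmonoid.closure ({p * q, r} : Set ℕ)) ∨
    S.carrier = ↑(AddSubmonoid.closure ({q * r, p} : Set ℕ)) := by
  obtain ⟨hdvd, hP_ne_one, hmin⟩ := hdh
  have hone : 1 ∉ S.carrier := fun h =>
    hP_ne_one 1 one_pos (by rw [S.P_eq_one_of_one_mem h, pow_zero])
  have hN : 0 < p * q * r := Nat.mul_pos (Nat.mul_pos hp.pos hq.pos) hr.pos
  obtain ⟨E, hEN, hP, hE1⟩ :=
    exists_eq_prod_cyclotomic_of_dvd_X_pow_sub_one hN (by simpa using hdvd) S.eval_one_P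
  have hE (e) (he : e ∈ E) := eq_of_dvd_mul_mul_of_eval_one_cyclotomic hp hq hr
    (Nat.dvd_of_mem_divisors (hEN he)) (hE1 e he)
  rcases prod_cyclotomic_cases hp hq hr hpq hpr hqr hE (hP ▸ S.coeff_one_P hone) with
    ⟨e, rfl, he⟩ | h | h | h
  · have he_dvd : e ∣ p * q * r := Nat.dvd_of_mem_divisors (hEN (Finset.mem_singleton_self e))
    refine absurd ?_ (hmin e he_dvd (lt_of_le_of_ne (Nat.le_of_dvd hN he_dvd) he))
    rw [hP, Finset.prod_singleton, pow_one]
    exact cyclotomic.dvd_X_pow_sub_one e ℤ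
  · exact Or.inl (S.carrier_eq_closure_of_P_eq_cyclotomic hp hq hr hpq hpr hqr (hP.trans h))
  · refine Or.inr (Or.inl (S.carrier_eq_closure_of_P_eq_cyclotomic hp hr hq hpr hpq hqr.symm ?_))
    rw [hP, h, mul_comm r q, mul_right_comm p r q]
  · refine Or.inr (Or.inr (S.carrier_eq_closure_of_P_eq_cyclotomic hq hp hr hpq.symm hqr hpr ?_))
    rw [hP, h, mul_comm q p]

open NumericalSemigroup in
/-- If `p, q, r` are distinct primes and `S` is a cyclotomic numerical semigroup of
depth `pqr` and height `1`, then `S` is `⟨pr, q⟩`, `⟨pq, r⟩` or `⟨qr, p⟩`. -/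
theorem depth_pqr_height_one (p q r : ℕ) (hp : p.Prime) (hq : q.Prime) (hr : r.Prime)
    (hpq : p ≠ q) (hpr : p ≠ r) (hqr : q ≠ r) (S : NumericalSemigroup)
    (hcyc : S.IsCyclotomicNS) (hdh : HasDepthHeight S (p * q * r) 1) :
    S.carrier = ↑(AddSubmonoid.closure ({p * r, q} : Set ℕ)) ∨
    S.carrier = ↑(AddSubmonoid.closure ({p * q, r} : Set ℕ)) ∨
    S.carrier = ↑(AddSubmonoid.closure ({q * r, p} : Set ℕ)) :=
  depth_pqr_height_one_general p q r hp hq hr hpq hpr hqr S hdh
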